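/- arXiv:1304.3754 — 2 statements merged into one kernel-verified Lean document; each statement's English description precedes it below -/
import Mathlib

section
/- Fix a finite set Y ⊂ ℝ^d, f : Y → {-1,1}, t ∈ ℕ, and w > 0. The degree-t non-constant margin weight satisfies w*(f,t) ≥ w if and only if there exists a probability distribution μ on Y such that Σ_{y∈Y} μ(y) f(y) = 0 and |Σ_{y∈Y} μ(y) f(y) χ_S(y)| ≤ 1/w for every nonempty S ⊆ [d] with |S| ≤ t. -/
open Classical in
/-- Degree of a multilinear polynomial given by its coefficient vector. -/
noncomputable def polyDegree {ι : Type*} [Fintype ι] (c : Finset ι → ℝ) : ℕ :=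
  Finset.sup (Finset.univ.filter fun S => c S ≠ 0) Finset.card

/-- Evaluation of a multilinear polynomial given by its coefficient vector. -/
noncomputable def evalPoly {ι : Type*} [Fintype ι] (c : Finset ι → ℝ) (x : ι → ℝ) : ℝ :=
  ∑ S : Finset ι, c S * ∏ i ∈ S, x i

/-- Weight (L1-norm of the coefficient vector) of a multilinear polynomial. -/
noncomputable def weight {ι : Type*} [Fintype ι] (c : Finset ι → ℝ) : ℝ :=
  ∑ S : Finset ι, |c S|

open Classical in
/-- The OR function on `{-1,1}^d`, with `-1` = TRUE. -/
noncomputable def ORd {d : ℕ} (x : Fin d → ℝ) : ℝ :=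
  if ∃ i, x i = -1 then -1 else 1

/-- The Boolean cube `{-1,1}^d` inside `ℝ^d`. -/
def cube (d : ℕ) : Set (Fin d → ℝ) := {x | ∀ i, x i = 1 ∨ x i = -1}

open Classical in
/-- Hamming weight: number of coordinates equal to `-1`. -/
noncomputable def hamming {d : ℕ} (x : Fin d → ℝ) : ℕ :=
  (Finset.univ.filter fun i => x i = -1).card

/-!
Weak duality: summing `f y * p y ≥ 1` against `μ` pairs the coefficients of `p` with the
correlations `∑ μ f χ_S`, which vanish at `S = ∅` and have size at most `1 / w` otherwise, so
`1 ≤ w*(p) / w`. Strong duality: if no such `μ` exists, the convex hull of the vectors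
`(f y χ_S(y))_{|S| ≤ t}`, `y ∈ Y`, misses the box `{0} × [-1/w, 1/w]^{S ≠ ∅}`. A separating
functional is a polynomial `p` of degree at most `t` with `f · p < u` on `Y`, where
`u < -w*(p) / w`, the minimum of the functional on the box; hence `p / u` has margin at least `1`
on `Y` and weight below `w`.
-/

open Finset

section LinearProgrammingDuality

variable {α ι : Type*} [Fintype ι]

theorem exists_weights_of_mem_convexHull_image {E : Type*} [AddCommGroup E] [Module ℝ E]
    {Y : Finset α} {a : α → E} {x : E} (hx : x ∈ convexHull ℝ (a '' Y)) :
    ∃ μ : α → ℝ, (∀ y ∈ Y, 0 ≤ μ y) ∧ ∑ y ∈ Y, μ y = 1 ∧ ∑ y ∈ Y, μ y • a y = x := by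
  classical
  suffices convexHull ℝ (a '' Y) ⊆
      {x | ∃ μ : α → ℝ, (∀ y ∈ Y, 0 ≤ μ y) ∧ ∑ y ∈ Y, μ y = 1 ∧ ∑ y ∈ Y, μ y • a y = x} from this hx
  refine convexHull_min ?_ ?_
  · rintro _ ⟨y, hy : y ∈ Y, rfl⟩
    refine ⟨fun z => if z = y then 1 else 0, fun z _ => ?_, ?_, ?_⟩
    · positivity
    · simp [hy]
    · simp [ite_smul, hy]
  · rintro _ ⟨μ, hμ0, hμ1, rfl⟩ _ ⟨ν, hν0, hν1, rfl⟩ s t hs ht hst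
    refine ⟨s • μ + t • ν, fun y hy => ?_, ?_, ?_⟩
    · exact add_nonneg (mul_nonneg hs (hμ0 y hy)) (mul_nonneg ht (hν0 y hy))
    · simp [sum_add_distrib, ← mul_sum, hμ1, hν1, hst]
    · simp [add_smul, mul_smul, sum_add_distrib, smul_sum]

theorem exists_dotProduct_separation {Y : Finset α} {a : α → ι → ℝ} {C : Set (ι → ℝ)}
    (hconv : Convex ℝ C) (hclosed : IsClosed C)
    (h : ∀ μ : α → ℝ, (∀ y ∈ Y, 0 ≤ μ y) → ∑ y ∈ Y, μ y = 1 → ∑ y ∈ Y, μ y • a y ∉ C) :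
    ∃ (c : ι → ℝ) (u : ℝ), (∀ y ∈ Y, c ⬝ᵥ a y < u) ∧ ∀ ξ ∈ C, u < c ⬝ᵥ ξ := by
  classical
  have hdisj : Disjoint (convexHull ℝ (a '' Y)) C := by
    rw [Set.disjoint_left]
    intro x hx hxC
    obtain ⟨μ, hμ0, hμ1, rfl⟩ := exists_weights_of_mem_convexHull_image hx
    exact h μ hμ0 hμ1 hxC
  obtain ⟨φ, u, v, hφu, huv, hvφ⟩ := geometric_hahn_banach_compact_closed
    (convex_convexHull ℝ _) ((Y.finite_toSet.image a).isCompact_convexHull ℝ) hconv hclosed hdisj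
  set c := (dotProductEquiv ℝ ι).symm φ.toLinearMap
  have hφ (ξ : ι → ℝ) : c ⬝ᵥ ξ = φ ξ :=
    LinearMap.congr_fun ((dotProductEquiv ℝ ι).apply_symm_apply φ.toLinearMap) ξ
  refine ⟨c, u, fun y hy => ?_, fun ξ hξ => ?_⟩
  · rw [hφ]
    exact hφu _ (subset_convexHull ℝ _ ⟨y, hy, rfl⟩)
  · rw [hφ]
    exact huv.trans (hvφ ξ hξ)

theorem exists_dual_of_forall_le_weight {Y : Finset α} {a : α → ι → ℝ} {P : Finset ι} {w : ℝ}
    (hw : 0 < w) (h : ∀ c : ι → ℝ, (∀ y ∈ Y, 1 ≤ c ⬝ᵥ a y) → w ≤ ∑ i ∈ P, |c i|) :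
    ∃ μ : α → ℝ, (∀ y ∈ Y, 0 ≤ μ y) ∧ ∑ y ∈ Y, μ y = 1 ∧
      (∀ i ∉ P, ∑ y ∈ Y, μ y * a y i = 0) ∧ ∀ i ∈ P, |∑ y ∈ Y, μ y * a y i| ≤ 1 / w := by
  classical
  let C : Set (ι → ℝ) := Set.univ.pi fun i => if i ∈ P then Set.Icc (-(1 / w)) (1 / w) else {0}
  by_contra hμ
  obtain ⟨c, u, hYu, huC⟩ : ∃ (c : ι → ℝ) (u : ℝ),
      (∀ y ∈ Y, c ⬝ᵥ a y < u) ∧ ∀ ξ ∈ C, u < c ⬝ᵥ ξ := by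
    refine exists_dotProduct_separation (convex_pi fun i _ => ?_) (isClosed_set_pi fun i _ => ?_) ?_
    · split_ifs
      exacts [convex_Icc _ _, convex_singleton _]
    · split_ifs
      exacts [isClosed_Icc, isClosed_singleton]
    · intro μ hμ0 hμ1 hmem
      refine hμ ⟨μ, hμ0, hμ1, fun i hi => ?_, fun i hi => ?_⟩
      · simpa [C, hi, Finset.sum_apply] using hmem i (Set.mem_univ i)
      · simpa [C, hi, Finset.sum_apply, abs_le] using hmem i (Set.mem_univ i)
  set W := ∑ i ∈ P, |c i|
  have huW : u < -(W / w) := by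
    -- the vertex of the box at which `c ⬝ᵥ ·` is smallest
    have hvertex : (fun i => if i ∈ P then -(SignType.sign (c i) : ℝ) * (1 / w) else 0) ∈ C := by
      intro i _
      by_cases hi : i ∈ P
      · rcases lt_trichotomy (c i) 0 with h | h | h <;> simp [hi, h, hw.le, neg_le_self_iff]
      · simp [hi]
    convert huC _ hvertex using 1
    simp [dotProduct, W, mul_ite, sum_ite_mem, ← mul_assoc, div_eq_mul_inv, sum_mul]
  have hu : u < 0 := huW.trans_le (neg_nonpos.2 (by positivity))
  have hfeas : ∀ y ∈ Y, 1 ≤ u⁻¹ • c ⬝ᵥ a y := fun y hy => by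
    rw [smul_dotProduct, smul_eq_mul, ← div_eq_inv_mul, one_le_div_of_neg hu]
    exact (hYu y hy).le
  have hweight : ∑ i ∈ P, |(u⁻¹ • c) i| < w := by
    simp only [Pi.smul_apply, smul_eq_mul, abs_mul, abs_inv, abs_of_neg hu, ← mul_sum]
    rw [← div_eq_inv_mul, div_lt_iff₀ (neg_pos.2 hu)]
    have := (div_lt_iff₀ hw).1 (lt_neg.1 huW)
    linarith
  exact (h _ hfeas).not_gt hweight

theorem le_weight_of_dual {Y : Finset α} {a : α → ι → ℝ} {P : Finset ι} {w : ℝ} (hw : 0 < w)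
    {μ : α → ℝ} (hμ0 : ∀ y ∈ Y, 0 ≤ μ y) (hμ1 : ∑ y ∈ Y, μ y = 1)
    (hfree : ∀ i ∉ P, ∑ y ∈ Y, μ y * a y i = 0) (hpen : ∀ i ∈ P, |∑ y ∈ Y, μ y * a y i| ≤ 1 / w)
    {c : ι → ℝ} (hc : ∀ y ∈ Y, 1 ≤ c ⬝ᵥ a y) : w ≤ ∑ i ∈ P, |c i| := by
  have hswap : ∑ y ∈ Y, μ y * (c ⬝ᵥ a y) = ∑ i ∈ P, c i * ∑ y ∈ Y, μ y * a y i := by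
    rw [sum_subset (subset_univ P) fun i _ hi => by rw [hfree i hi, mul_zero]]
    simp only [dotProduct, mul_sum]
    rw [sum_comm]
    exact sum_congr rfl fun _ _ => sum_congr rfl fun _ _ => by ring
  rw [← one_le_div hw]
  calc 1 = ∑ y ∈ Y, μ y * 1 := by simp [hμ1]
    _ ≤ ∑ y ∈ Y, μ y * (c ⬝ᵥ a y) :=
      sum_le_sum fun y hy => mul_le_mul_of_nonneg_left (hc y hy) (hμ0 y hy)
    _ = ∑ i ∈ P, c i * ∑ y ∈ Y, μ y * a y i := hswap
    _ ≤ ∑ i ∈ P, |c i| * (1 / w) := sum_le_sum fun i hi =>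
      (le_abs_self _).trans ((abs_mul _ _).trans_le
        (mul_le_mul_of_nonneg_left (hpen i hi) (abs_nonneg _)))
    _ = (∑ i ∈ P, |c i|) / w := by rw [← sum_mul, mul_one_div]

theorem forall_le_weight_iff_exists_dual {Y : Finset α} {a : α → ι → ℝ} {P : Finset ι} {w : ℝ}
    (hw : 0 < w) :
    (∀ c : ι → ℝ, (∀ y ∈ Y, 1 ≤ c ⬝ᵥ a y) → w ≤ ∑ i ∈ P, |c i|) ↔
      ∃ μ : α → ℝ, (∀ y ∈ Y, 0 ≤ μ y) ∧ ∑ y ∈ Y, μ y = 1 ∧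
        (∀ i ∉ P, ∑ y ∈ Y, μ y * a y i = 0) ∧ ∀ i ∈ P, |∑ y ∈ Y, μ y * a y i| ≤ 1 / w :=
  ⟨exists_dual_of_forall_le_weight hw, fun ⟨_, hμ0, hμ1, hfree, hpen⟩ _ hc =>
    le_weight_of_dual hw hμ0 hμ1 hfree hpen hc⟩

end LinearProgrammingDuality

section MultilinearPolynomial

variable {σ : Type*} [Fintype σ] {t : ℕ}

theorem polyDegree_le_iff {c : Finset σ → ℝ} :
    polyDegree c ≤ t ↔ ∀ S : Finset σ, t < S.card → c S = 0 := by
  simp only [polyDegree, Finset.sup_le_iff, mem_filter, Finset.mem_univ, true_and]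
  exact forall_congr' fun S => by rw [← not_imp_not, not_not, not_le]

theorem sum_eq_sum_subtype_card_le {M : Type*} [AddCommMonoid M] {F : Finset σ → M}
    (hF : ∀ S : Finset σ, t < S.card → F S = 0) :
    ∑ S, F S = ∑ S : {S : Finset σ // S.card ≤ t}, F S := by
  classical
  rw [← Fintype.sum_subtype_add_sum_subtype (fun S : Finset σ => S.card ≤ t) F,
    sum_eq_zero fun (S : {S : Finset σ // ¬S.card ≤ t}) _ => hF S (not_le.1 S.2), add_zero]

theorem evalPoly_eq_dotProduct {c : Finset σ → ℝ} (hc : polyDegree c ≤ t) (x : σ → ℝ) :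
    evalPoly c x = (fun S : {S : Finset σ // S.card ≤ t} => c S) ⬝ᵥ fun S => ∏ i ∈ S.1, x i :=
  sum_eq_sum_subtype_card_le fun S hS => by rw [polyDegree_le_iff.1 hc S hS, zero_mul]

theorem sum_abs_filter_ne_empty_eq [DecidableEq σ] {c : Finset σ → ℝ} (hc : polyDegree c ≤ t) :
    ∑ S ∈ univ.filter (fun S : Finset σ => S ≠ ∅), |c S| =
      ∑ S ∈ univ.filter (fun S : {S : Finset σ // S.card ≤ t} => S.1 ≠ ∅), |c S| := by
  rw [sum_filter, sum_filter]
  exact sum_eq_sum_subtype_card_le fun S hS => by simp [polyDegree_le_iff.1 hc S hS]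

theorem forall_polyDegree_le_iff [DecidableEq σ] (Y : Finset (σ → ℝ)) (f : (σ → ℝ) → ℝ) (w : ℝ) :
    (∀ c : Finset σ → ℝ, polyDegree c ≤ t → (∀ y ∈ Y, 1 ≤ f y * evalPoly c y) →
        w ≤ ∑ S ∈ univ.filter (fun S : Finset σ => S ≠ ∅), |c S|) ↔
      ∀ c : {S : Finset σ // S.card ≤ t} → ℝ,
        (∀ y ∈ Y, 1 ≤ c ⬝ᵥ fun S => f y * ∏ i ∈ S.1, y i) →
        w ≤ ∑ S ∈ univ.filter (fun S : {S : Finset σ // S.card ≤ t} => S.1 ≠ ∅), |c S| := by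
  have hmargin {c : Finset σ → ℝ} (hc : polyDegree c ≤ t) (y : σ → ℝ) :
      f y * evalPoly c y = (fun S : {S : Finset σ // S.card ≤ t} => c S) ⬝ᵥ
        fun S => f y * ∏ i ∈ S.1, y i := by
    simp only [evalPoly_eq_dotProduct hc, dotProduct, mul_sum, mul_left_comm]
  constructor
  · intro h c hc
    have hres (S : {S : Finset σ // S.card ≤ t}) : Function.extend Subtype.val c 0 S = c S :=
      Subtype.val_injective.extend_apply _ _ _
    have hdeg : polyDegree (Function.extend Subtype.val c 0) ≤ t :=
      polyDegree_le_iff.2 fun S hS => Function.extend_apply' _ _ _ fun ⟨S', hS'⟩ =>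
        (hS' ▸ S'.2).not_gt hS
    simpa only [sum_abs_filter_ne_empty_eq hdeg, hres] using
      h _ hdeg fun y hy => by simpa only [hmargin hdeg, hres] using hc y hy
  · intro h c hc hfeas
    rw [sum_abs_filter_ne_empty_eq hc]
    exact h _ fun y hy => hmargin hc y ▸ hfeas y hy

end MultilinearPolynomial

theorem stmt_9_general (d t : ℕ) (w : ℝ) (hw : 0 < w)
    (Y : Finset (Fin d → ℝ)) (f : (Fin d → ℝ) → ℝ) :
    (∀ c : Finset (Fin d) → ℝ, polyDegree c ≤ t →
        (∀ y ∈ Y, 1 ≤ f y * evalPoly c y) →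
        w ≤ ∑ S ∈ Finset.univ.filter (fun S : Finset (Fin d) => S ≠ ∅), |c S|) ↔
    ∃ μ : (Fin d → ℝ) → ℝ,
      (∀ y ∈ Y, 0 ≤ μ y) ∧ (∑ y ∈ Y, μ y) = 1 ∧
      (∑ y ∈ Y, μ y * f y) = 0 ∧
      ∀ S : Finset (Fin d), S ≠ ∅ → S.card ≤ t →
        |∑ y ∈ Y, μ y * f y * ∏ i ∈ S, y i| ≤ 1 / w := by
  rw [forall_polyDegree_le_iff, forall_le_weight_iff_exists_dual hw]
  refine exists_congr fun μ => and_congr_right' (and_congr_right' ?_)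
  simp only [mem_filter, Finset.mem_univ, true_and, not_not, Subtype.forall, mul_assoc]
  constructor
  · rintro ⟨hconst, hpen⟩
    exact ⟨by simpa using hconst ∅ (by simp) rfl, fun S hS hSt => hpen S hSt hS⟩
  · rintro ⟨hconst, hpen⟩
    exact ⟨fun S _ hS => by simpa [hS] using hconst, fun S hSt hS => hpen S hS hSt⟩

theorem stmt_9 (d t : ℕ) (w : ℝ) (hw : 0 < w)
    (Y : Finset (Fin d → ℝ)) (f : (Fin d → ℝ) → ℝ)
    (hf : ∀ y ∈ Y, f y = 1 ∨ f y = -1) :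
    (∀ c : Finset (Fin d) → ℝ, polyDegree c ≤ t →
        (∀ y ∈ Y, 1 ≤ f y * evalPoly c y) →
        w ≤ ∑ S ∈ Finset.univ.filter (fun S : Finset (Fin d) => S ≠ ∅), |c S|) ↔
    ∃ μ : (Fin d → ℝ) → ℝ,
      (∀ y ∈ Y, 0 ≤ μ y) ∧ (∑ y ∈ Y, μ y) = 1 ∧
      (∑ y ∈ Y, μ y * f y) = 0 ∧
      ∀ S : Finset (Fin d), S ≠ ∅ → S.card ≤ t →
        |∑ y ∈ Y, μ y * f y * ∏ i ∈ S, y i| ≤ 1 / w :=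
  stmt_9_general d t w hw Y f
end

section
/- For any 0 < c < k ≤ d, there exists a d-variate multilinear polynomial of degree at most k·d^{1−c/k} and weight at most d^{O(c)} (up to 2^{O(k)} factors) that exactly computes OR_d on all inputs of Hamming weight at most k, obtained by composing a degree-k interpolating polynomial for the outer OR on k blocks with exact low-weight inner OR polynomials. -/
open Finset
open scoped symmDiff

section Linear

variable {ι : Type*} [Fintype ι]

lemma evalPoly_sub (p q : Finset ι → ℝ) (x : ι → ℝ) :
    evalPoly (p - q) x = evalPoly p x - evalPoly q x := by
  simp only [evalPoly, Pi.sub_apply, sub_mul, sum_sub_distrib]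

lemma evalPoly_smul (a : ℝ) (p : Finset ι → ℝ) (x : ι → ℝ) :
    evalPoly (a • p) x = a * evalPoly p x := by
  simp only [evalPoly, Pi.smul_apply, smul_eq_mul, mul_sum, mul_assoc]

lemma evalPoly_sum {τ : Type*} (J : Finset τ) (f : τ → Finset ι → ℝ) (x : ι → ℝ) :
    evalPoly (∑ j ∈ J, f j) x = ∑ j ∈ J, evalPoly (f j) x := by
  simp only [evalPoly, Finset.sum_apply, sum_mul]
  exact sum_comm

lemma evalPoly_single [DecidableEq ι] (S : Finset ι) (a : ℝ) (x : ι → ℝ) :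
    evalPoly (Pi.single S a) x = a * ∏ i ∈ S, x i := by
  simp [evalPoly, Pi.single_apply]

lemma weight_nonneg (p : Finset ι → ℝ) : 0 ≤ weight p :=
  sum_nonneg fun _ _ => abs_nonneg _

lemma weight_sub_le (p q : Finset ι → ℝ) : weight (p - q) ≤ weight p + weight q := by
  rw [weight, weight, weight, ← sum_add_distrib]
  exact sum_le_sum fun S _ => abs_sub _ _

lemma weight_smul (a : ℝ) (p : Finset ι → ℝ) : weight (a • p) = |a| * weight p := by
  simp only [weight, Pi.smul_apply, smul_eq_mul, abs_mul, mul_sum]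

lemma weight_sum_le {τ : Type*} (J : Finset τ) (f : τ → Finset ι → ℝ) :
    weight (∑ j ∈ J, f j) ≤ ∑ j ∈ J, weight (f j) := by
  simp only [weight, Finset.sum_apply]
  rw [sum_comm]
  exact sum_le_sum fun S _ => abs_sum_le_sum_abs _ _

lemma weight_single [DecidableEq ι] (S : Finset ι) (a : ℝ) : weight (Pi.single S a) = |a| := by
  simp [weight, Pi.single_apply, apply_ite]

lemma polyDegree_le_iff_s19 {p : Finset ι → ℝ} {n : ℕ} :
    polyDegree p ≤ n ↔ ∀ S, p S ≠ 0 → S.card ≤ n := by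
  simp [polyDegree]

lemma card_le_polyDegree {p : Finset ι → ℝ} {S : Finset ι} (h : p S ≠ 0) :
    S.card ≤ polyDegree p :=
  polyDegree_le_iff_s19.mp le_rfl S h

lemma polyDegree_sub_le (p q : Finset ι → ℝ) :
    polyDegree (p - q) ≤ max (polyDegree p) (polyDegree q) := by
  refine polyDegree_le_iff_s19.mpr fun S hS => ?_
  by_cases hp : p S = 0
  · have hq : q S ≠ 0 := by simpa [hp] using hS
    exact le_max_of_le_right (card_le_polyDegree hq)
  · exact le_max_of_le_left (card_le_polyDegree hp)

lemma polyDegree_smul_le (a : ℝ) (p : Finset ι → ℝ) : polyDegree (a • p) ≤ polyDegree p :=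
  polyDegree_le_iff_s19.mpr fun _ hS => card_le_polyDegree (right_ne_zero_of_mul hS)

lemma polyDegree_sum_le {τ : Type*} (J : Finset τ) (f : τ → Finset ι → ℝ) {n : ℕ}
    (hf : ∀ j ∈ J, polyDegree (f j) ≤ n) : polyDegree (∑ j ∈ J, f j) ≤ n := by
  refine polyDegree_le_iff_s19.mpr fun S hS => ?_
  rw [Finset.sum_apply] at hS
  obtain ⟨j, hj, hjS⟩ := exists_ne_zero_of_sum_ne_zero hS
  exact (card_le_polyDegree hjS).trans (hf j hj)

lemma polyDegree_single [DecidableEq ι] (S : Finset ι) (a : ℝ) :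
    polyDegree (Pi.single S a) ≤ S.card :=
  polyDegree_le_iff_s19.mpr fun T hT => by
    obtain rfl : T = S := by by_contra h; simp [h] at hT
    exact le_rfl

lemma weight_one_sub_smul_le [DecidableEq ι] (a : ℝ) (p : Finset ι → ℝ) :
    weight (Pi.single ∅ 1 - a • p) ≤ 1 + |a| * weight p :=
  (weight_sub_le _ _).trans_eq (by rw [weight_single, weight_smul, abs_one])

lemma polyDegree_one_sub_smul_le [DecidableEq ι] (a : ℝ) (p : Finset ι → ℝ) :
    polyDegree (Pi.single ∅ 1 - a • p) ≤ polyDegree p :=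
  (polyDegree_sub_le _ _).trans <|
    max_le ((polyDegree_single _ _).trans (by simp)) (polyDegree_smul_le a p)

end Linear

section Product

variable {ι : Type*} [Fintype ι] [DecidableEq ι]

lemma prod_symmDiff_of_cube (x : ι → ℝ) (hx : ∀ i, x i = 1 ∨ x i = -1) (A B : Finset ι) :
    ∏ i ∈ A ∆ B, x i = (∏ i ∈ A, x i) * ∏ i ∈ B, x i := by
  have hind : ∀ C : Finset ι, ∏ i ∈ C, x i = ∏ i, if i ∈ C then x i else 1 := fun C => by
    rw [prod_ite_mem, univ_inter]
  rw [hind, hind A, hind B, ← prod_mul_distrib]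
  refine prod_congr rfl fun i _ => ?_
  by_cases hA : i ∈ A <;> by_cases hB : i ∈ B <;> rcases hx i with h | h <;>
    simp [mem_symmDiff, hA, hB, h]

/-- Multiplication of multilinear polynomials as functions on the cube: there `x_i ^ 2 = 1`,
so the monomials `x_A` and `x_B` multiply to `x_(A ∆ B)`. -/
def polyMul (p q : Finset ι → ℝ) : Finset ι → ℝ :=
  fun S => ∑ A, p A * q (S ∆ A)

lemma sum_comp_symmDiff (A : Finset ι) (f : Finset ι → ℝ) : ∑ S, f (S ∆ A) = ∑ S, f S :=
  Fintype.sum_bijective _ (symmDiff_left_involutive A).bijective _ _ fun _ => rfl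

lemma evalPoly_polyMul (p q : Finset ι → ℝ) (x : ι → ℝ) (hx : ∀ i, x i = 1 ∨ x i = -1) :
    evalPoly (polyMul p q) x = evalPoly p x * evalPoly q x := by
  calc evalPoly (polyMul p q) x
      = ∑ A, ∑ S, p A * q (S ∆ A) * ∏ i ∈ S, x i := by
        simp only [evalPoly, polyMul, sum_mul]
        exact sum_comm
    _ = ∑ A, ∑ B, (p A * ∏ i ∈ A, x i) * (q B * ∏ i ∈ B, x i) := by
        refine sum_congr rfl fun A _ => ?_
        rw [← sum_comp_symmDiff A]
        refine sum_congr rfl fun B _ => ?_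
        rw [symmDiff_symmDiff_cancel_right, prod_symmDiff_of_cube x hx]
        ring
    _ = evalPoly p x * evalPoly q x := by rw [evalPoly, evalPoly, sum_mul_sum]

lemma weight_polyMul_le (p q : Finset ι → ℝ) : weight (polyMul p q) ≤ weight p * weight q := by
  calc weight (polyMul p q)
      ≤ ∑ S, ∑ A, |p A| * |q (S ∆ A)| :=
        sum_le_sum fun S _ => (abs_sum_le_sum_abs _ _).trans_eq (by simp only [abs_mul])
    _ = ∑ A, |p A| * weight q := by
        rw [sum_comm]
        exact sum_congr rfl fun A _ => by
          rw [← mul_sum, sum_comp_symmDiff A (fun S => |q S|), weight]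
    _ = weight p * weight q := by rw [← sum_mul]; rfl

lemma polyDegree_polyMul_le (p q : Finset ι → ℝ) :
    polyDegree (polyMul p q) ≤ polyDegree p + polyDegree q := by
  refine polyDegree_le_iff_s19.mpr fun S hS => ?_
  obtain ⟨A, -, hA⟩ := exists_ne_zero_of_sum_ne_zero hS
  calc S.card = (S ∆ A ∆ A).card := by rw [symmDiff_symmDiff_cancel_right]
    _ ≤ (S ∆ A).card + A.card := (card_le_card symmDiff_subset_union).trans (card_union_le _ _)
    _ ≤ polyDegree p + polyDegree q := by
        rw [add_comm]
        exact add_le_add (card_le_polyDegree (left_ne_zero_of_mul hA))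
          (card_le_polyDegree (right_ne_zero_of_mul hA))

def polyProdRange (f : ℕ → Finset ι → ℝ) : ℕ → Finset ι → ℝ
  | 0 => Pi.single ∅ 1
  | n + 1 => polyMul (f n) (polyProdRange f n)

lemma evalPoly_polyProdRange (f : ℕ → Finset ι → ℝ) (n : ℕ) (x : ι → ℝ)
    (hx : ∀ i, x i = 1 ∨ x i = -1) :
    evalPoly (polyProdRange f n) x = ∏ t ∈ range n, evalPoly (f t) x := by
  induction n with
  | zero => simp [polyProdRange, evalPoly_single]
  | succ n ih => rw [polyProdRange, evalPoly_polyMul _ _ x hx, ih, prod_range_succ, mul_comm]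

lemma weight_polyProdRange_le (f : ℕ → Finset ι → ℝ) (n : ℕ) :
    weight (polyProdRange f n) ≤ ∏ t ∈ range n, weight (f t) := by
  induction n with
  | zero => simp [polyProdRange, weight_single]
  | succ n ih =>
    rw [polyProdRange, prod_range_succ, mul_comm]
    exact (weight_polyMul_le _ _).trans (mul_le_mul_of_nonneg_left ih (weight_nonneg _))

lemma polyDegree_polyProdRange_le (f : ℕ → Finset ι → ℝ) (n : ℕ) :
    polyDegree (polyProdRange f n) ≤ ∑ t ∈ range n, polyDegree (f t) := by
  induction n with
  | zero => simpa [polyProdRange] using polyDegree_single (∅ : Finset ι) 1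
  | succ n ih =>
    rw [polyProdRange, sum_range_succ, add_comm]
    exact (polyDegree_polyMul_le _ _).trans (by gcongr)

end Product

/-- The degree-`k` interpolant of `N ↦ [N = 0]` on `{0, …, k}`, whose roots are `1, …, k`. -/
lemma prod_range_one_sub_inv_mul_eq_ite {k N : ℕ} (hN : N ≤ k) :
    ∏ t ∈ range k, (1 - ((t : ℝ) + 1)⁻¹ * N) = if N = 0 then 1 else 0 := by
  split_ifs with h0
  · simp [h0]
  · refine prod_eq_zero (i := N - 1) (mem_range.mpr (by omega)) ?_
    rw [Nat.cast_pred (Nat.pos_of_ne_zero h0), sub_add_cancel,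
      inv_mul_cancel₀ (Nat.cast_ne_zero.mpr h0), sub_self]

section OrConstruction

variable {ι κ : Type*} [Fintype ι] [DecidableEq ι] [DecidableEq κ]

def prodAddOnePoly (B : Finset ι) : Finset ι → ℝ :=
  ∑ S ∈ B.powerset, Pi.single S 1

lemma evalPoly_prodAddOnePoly (B : Finset ι) (x : ι → ℝ) :
    evalPoly (prodAddOnePoly B) x = ∏ i ∈ B, (x i + 1) := by
  simp [prodAddOnePoly, evalPoly_sum, evalPoly_single, prod_add_one]

lemma weight_prodAddOnePoly_le (B : Finset ι) : weight (prodAddOnePoly B) ≤ 2 ^ B.card :=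
  (weight_sum_le _ _).trans_eq (by simp [weight_single])

lemma polyDegree_prodAddOnePoly_le (B : Finset ι) : polyDegree (prodAddOnePoly B) ≤ B.card :=
  polyDegree_sum_le _ _ fun S hS =>
    (polyDegree_single S 1).trans (card_le_card (mem_powerset.mp hS))

noncomputable def orIndicatorPoly (B : Finset ι) : Finset ι → ℝ :=
  Pi.single ∅ 1 - (2 ^ B.card : ℝ)⁻¹ • prodAddOnePoly B

lemma evalPoly_orIndicatorPoly (B : Finset ι) (x : ι → ℝ) (hx : ∀ i, x i = 1 ∨ x i = -1) :
    evalPoly (orIndicatorPoly B) x = if ∃ i ∈ B, x i = -1 then 1 else 0 := by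
  rw [orIndicatorPoly, evalPoly_sub, evalPoly_smul, evalPoly_single, evalPoly_prodAddOnePoly,
    prod_empty, mul_one]
  split_ifs with h
  · obtain ⟨i, hi, hxi⟩ := h
    rw [prod_eq_zero hi (by rw [hxi]; norm_num), mul_zero, sub_zero]
  · have hB : ∀ i ∈ B, x i + 1 = 2 := fun i hi => by
      rcases hx i with hxi | hxi
      · rw [hxi]; norm_num
      · exact absurd ⟨i, hi, hxi⟩ h
    rw [prod_congr rfl hB, prod_const, inv_mul_cancel₀ (by positivity), sub_self]

lemma weight_orIndicatorPoly_le (B : Finset ι) : weight (orIndicatorPoly B) ≤ 2 := by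
  calc weight (orIndicatorPoly B)
      ≤ 1 + (2 ^ B.card : ℝ)⁻¹ * 2 ^ B.card := by
        refine (weight_one_sub_smul_le _ _).trans ?_
        rw [abs_of_pos (by positivity)]
        gcongr
        exact weight_prodAddOnePoly_le B
    _ = 2 := by rw [inv_mul_cancel₀ (by positivity)]; norm_num

lemma polyDegree_orIndicatorPoly_le (B : Finset ι) : polyDegree (orIndicatorPoly B) ≤ B.card :=
  (polyDegree_one_sub_smul_le _ _).trans (polyDegree_prodAddOnePoly_le B)

noncomputable def trueBlockCountPoly (f : ι → κ) : Finset ι → ℝ :=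
  ∑ j ∈ univ.image f, orIndicatorPoly {i | f i = j}

lemma evalPoly_trueBlockCountPoly (f : ι → κ) (x : ι → ℝ) (hx : ∀ i, x i = 1 ∨ x i = -1) :
    evalPoly (trueBlockCountPoly f) x = ((({i | x i = -1} : Finset ι).image f).card : ℝ) := by
  rw [trueBlockCountPoly, evalPoly_sum]
  simp only [evalPoly_orIndicatorPoly _ x hx, sum_boole]
  congr 2
  ext j
  simp only [mem_filter, mem_image, mem_univ, true_and]
  constructor
  · rintro ⟨-, i, hij, hxi⟩
    exact ⟨i, hxi, hij⟩
  · rintro ⟨i, hxi, hij⟩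
    exact ⟨⟨i, hij⟩, i, hij, hxi⟩

lemma weight_trueBlockCountPoly_le (f : ι → κ) :
    weight (trueBlockCountPoly f) ≤ 2 * (univ.image f).card :=
  (weight_sum_le _ _).trans <| (sum_le_sum fun _ _ => weight_orIndicatorPoly_le _).trans_eq
    (by rw [sum_const, nsmul_eq_mul, mul_comm])

lemma polyDegree_trueBlockCountPoly_le (f : ι → κ) {n : ℕ}
    (hf : ∀ j, ({i | f i = j} : Finset ι).card ≤ n) : polyDegree (trueBlockCountPoly f) ≤ n :=
  polyDegree_sum_le _ _ fun j _ => (polyDegree_orIndicatorPoly_le _).trans (hf j)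

/-- The blocks are the fibres of `f`; the outer `OR` is the interpolant
`prod_range_one_sub_inv_mul_eq_ite` applied to the number of true blocks. -/
noncomputable def blockOrPoly (f : ι → κ) (k : ℕ) : Finset ι → ℝ :=
  (2 : ℝ) • polyProdRange (fun t => Pi.single ∅ 1 - ((t : ℝ) + 1)⁻¹ • trueBlockCountPoly f) k -
    Pi.single ∅ 1

lemma evalPoly_blockOrPoly (f : ι → κ) (k : ℕ) (x : ι → ℝ) (hx : ∀ i, x i = 1 ∨ x i = -1)
    (hk : ({i | x i = -1} : Finset ι).card ≤ k) :
    evalPoly (blockOrPoly f k) x = if ∃ i, x i = -1 then -1 else 1 := by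
  have hcount : ((({i | x i = -1} : Finset ι).image f).card = 0 ↔ ¬∃ i, x i = -1) := by
    simp [Finset.eq_empty_iff_forall_notMem]
  simp only [blockOrPoly, evalPoly_sub, evalPoly_smul, evalPoly_polyProdRange _ _ x hx,
    evalPoly_single, evalPoly_trueBlockCountPoly f x hx, prod_empty, mul_one]
  rw [prod_range_one_sub_inv_mul_eq_ite (card_image_le.trans hk)]
  by_cases h : ∃ i, x i = -1 <;> norm_num [h, hcount]

lemma weight_blockOrPoly_le (f : ι → κ) (k : ℕ) :
    weight (blockOrPoly f k) ≤ 3 * (1 + 2 * (univ.image f).card) ^ k := by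
  set m : ℝ := ((univ.image f).card : ℝ)
  have hfactor : ∀ t : ℕ,
      weight (Pi.single ∅ 1 - ((t : ℝ) + 1)⁻¹ • trueBlockCountPoly f) ≤ 1 + 2 * m := fun t => by
    refine (weight_one_sub_smul_le _ _).trans ?_
    rw [abs_of_pos (by positivity)]
    refine add_le_add le_rfl ((mul_le_of_le_one_left (weight_nonneg _) ?_).trans
      (weight_trueBlockCountPoly_le f))
    exact inv_le_one_of_one_le₀ (by simp)
  have hprod := (weight_polyProdRange_le _ k).trans
    ((prod_le_prod (fun _ _ => weight_nonneg _) fun t _ => hfactor t).trans_eq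
      (by rw [prod_const, card_range]))
  have hone : (1 : ℝ) ≤ (1 + 2 * m) ^ k := one_le_pow₀ (le_add_of_nonneg_right (by positivity))
  calc weight (blockOrPoly f k)
      ≤ |(2 : ℝ)| * (1 + 2 * m) ^ k + 1 := by
        refine (weight_sub_le _ _).trans ?_
        rw [weight_smul, weight_single, abs_one]
        gcongr
    _ ≤ 3 * (1 + 2 * m) ^ k := by rw [abs_two]; linarith

lemma polyDegree_blockOrPoly_le (f : ι → κ) (k : ℕ) {n : ℕ}
    (hf : ∀ j, ({i | f i = j} : Finset ι).card ≤ n) : polyDegree (blockOrPoly f k) ≤ k * n := by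
  have hfactor : ∀ t : ℕ,
      polyDegree (Pi.single ∅ 1 - ((t : ℝ) + 1)⁻¹ • trueBlockCountPoly f) ≤ n := fun t =>
    (polyDegree_one_sub_smul_le _ _).trans (polyDegree_trueBlockCountPoly_le f hf)
  refine (polyDegree_sub_le _ _).trans <| max_le ?_ ((polyDegree_single _ _).trans (by simp))
  refine (polyDegree_smul_le _ _).trans <| (polyDegree_polyProdRange_le _ k).trans ?_
  exact (sum_le_sum fun t _ => hfactor t).trans_eq (by rw [sum_const, card_range, smul_eq_mul])

end OrConstruction

lemma card_filter_div_eq_le (d : ℕ) {b : ℕ} (hb : 0 < b) (j : ℕ) :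
    ({i : Fin d | i.1 / b = j} : Finset (Fin d)).card ≤ b := by
  refine (card_le_card_of_injOn (fun i => i.1 % b) (fun i _ => mem_range.mpr (Nat.mod_lt _ hb))
    fun i hi i' hi' h => ?_).trans_eq (card_range b)
  ext
  rw [← Nat.div_add_mod i.1 b, ← Nat.div_add_mod i'.1 b, (mem_filter.mp hi).2,
    (mem_filter.mp hi').2, show i.1 % b = i'.1 % b from h]

lemma card_image_div_le (d b : ℕ) : (univ.image fun i : Fin d => i.1 / b).card ≤ d / b + 1 :=
  (card_le_card (image_subset_iff.mpr fun i _ =>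
    mem_range.mpr (Nat.lt_succ_of_le (Nat.div_le_div_right i.isLt.le)))).trans_eq (card_range _)

lemma card_image_div_floor_le (d : ℕ) {D E : ℝ} (hD : 1 ≤ D) (hE : 1 ≤ E) (hDE : D * E = d) :
    ((univ.image fun i : Fin d => i.1 / ⌊D⌋₊).card : ℝ) ≤ 3 * E := by
  set b := ⌊D⌋₊
  have hb : (1 : ℝ) ≤ b := by exact_mod_cast Nat.floor_pos.mpr hD
  have hDb : D ≤ 2 * b := by linarith [Nat.lt_floor_add_one D]
  have hdiv : ((d / b : ℕ) : ℝ) ≤ 2 * E := by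
    refine Nat.cast_div_le.trans ((div_le_iff₀ (by linarith)).mpr ?_)
    rw [← hDE]
    nlinarith
  calc _ ≤ ((d / b + 1 : ℕ) : ℝ) := by exact_mod_cast card_image_div_le d b
    _ ≤ 3 * E := by push_cast; linarith

lemma three_mul_one_add_two_mul_pow_le {k : ℕ} (hk : 0 < k) {E m : ℝ} (hE : 1 ≤ E) (hm0 : 0 ≤ m)
    (hm : m ≤ 3 * E) : 3 * (1 + 2 * m) ^ k ≤ 2 ^ ((6 : ℝ) * k) * E ^ k := by
  have h3 : (3 : ℝ) ≤ 9 ^ k := le_self_pow₀ (by norm_num) hk.ne' |>.trans' (by norm_num)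
  rw [show (6 : ℝ) * k = ((6 * k : ℕ) : ℝ) by push_cast; ring, Real.rpow_natCast, pow_mul]
  calc 3 * (1 + 2 * m) ^ k ≤ 9 ^ k * (7 * E) ^ k := by gcongr; linarith
    _ ≤ (2 ^ 6) ^ k * E ^ k := by rw [← mul_pow, ← mul_pow, ← mul_assoc]; gcongr; norm_num

theorem stmt_19 : ∃ C > (0 : ℝ), ∀ d k : ℕ, ∀ c' : ℝ, 0 < c' → c' < k → k ≤ d →
    ∃ q : Finset (Fin d) → ℝ,
      (polyDegree q : ℝ) ≤ k * (d : ℝ) ^ (1 - c' / k) ∧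
      weight q ≤ 2 ^ (C * k) * (d : ℝ) ^ (C * c') ∧
      ∀ x ∈ cube d, hamming x ≤ k → evalPoly q x = ORd x := by
  refine ⟨6, by norm_num, fun d k c' hc hck hkd => ?_⟩
  have hk : 0 < k := by exact_mod_cast hc.trans hck
  have hd : (1 : ℝ) ≤ d := by exact_mod_cast hk.trans_le hkd
  have hck' : c' / k ≤ 1 := (div_le_one (by positivity)).mpr hck.le
  set E := (d : ℝ) ^ (c' / k)
  set D := (d : ℝ) ^ (1 - c' / k)
  have hD : 1 ≤ D := Real.one_le_rpow hd (by linarith)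
  have hE : 1 ≤ E := Real.one_le_rpow hd (by positivity)
  have hDE : D * E = d := by
    rw [← Real.rpow_add (by linarith), sub_add_cancel, Real.rpow_one]
  have hEk : E ^ k = (d : ℝ) ^ c' := by
    rw [← Real.rpow_natCast, ← Real.rpow_mul (by linarith), div_mul_cancel₀ _ (by positivity)]
  set f := fun i : Fin d => i.1 / ⌊D⌋₊
  refine ⟨blockOrPoly f k, ?_, ?_, fun x hx hxk => ?_⟩
  · have hdeg := polyDegree_blockOrPoly_le f k (card_filter_div_eq_le d (Nat.floor_pos.mpr hD))
    calc (polyDegree (blockOrPoly f k) : ℝ) ≤ (k * ⌊D⌋₊ : ℕ) := by exact_mod_cast hdeg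
      _ ≤ k * D := by push_cast; gcongr; exact Nat.floor_le (by linarith)
  · calc weight (blockOrPoly f k) ≤ 3 * (1 + 2 * (univ.image f).card) ^ k :=
          weight_blockOrPoly_le f k
      _ ≤ 2 ^ ((6 : ℝ) * k) * E ^ k := three_mul_one_add_two_mul_pow_le hk hE (by positivity)
          (card_image_div_floor_le d hD hE hDE)
      _ ≤ 2 ^ ((6 : ℝ) * k) * (d : ℝ) ^ (6 * c') := by rw [hEk]; gcongr; linarith
  · rw [evalPoly_blockOrPoly f k x hx (by simpa [hamming] using hxk), ORd]
    congr
end
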